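/- arXiv:2510.03470 — 2 statements merged into one kernel-verified Lean document; each statement's English description precedes it below -/
import Mathlib

section
/- Let p, d, q, n ∈ ℕ, let E : ℝ^p → ℝ^d be any map, let F_1, …, F_n : ℝ^d → ℝ^d each be three times continuously differentiable (ContDiff ℝ 3), let W : ℝ^d → ℝ^q be a continuous linear map and b ∈ ℝ^q, and define the decoder D(z) = W z + b. For λ ∈ ℝ let R_λ = (id + λF_n) ∘ ⋯ ∘ (id + λF_1) and let f_λ(x) = D(R_λ(E(x))). Then for every x ∈ ℝ^p, the function λ ↦ f_λ(x) − ( D(E(x)) + λ·Σ_{i=1}^n W(F_i(E(x))) + λ²·Σ_{1 ≤ i < j ≤ n} W((D F_j)(E(x))(F_i(E(x)))) ) is O(λ³) as λ → 0. -/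
/-! Induction on the depth. If `R_m(z) = z + λA + λ²B + O(λ³)`, then
`R_{m+1}(z) = R_m(z) + λ F_{m+1}(R_m(z))`, and since the first-order Taylor remainder of a `C²`
map at `z` is `O(‖· - z‖²)`, `F_{m+1}(R_m(z)) = F_{m+1}(z) + λ DF_{m+1}(z) A + O(λ²)`.
The new terms are `λ F_{m+1}(z)` and the `λ²` terms for the pairs `(i, m+1)`, `i ≤ m`.
A continuous affine decoder preserves the expansion. -/

open Topology Asymptotics Finset

/-- A single residual block `(1 + λ F)(z) = z + λ • F z`. -/
noncomputable def resBlock {d : ℕ} (lam : ℝ)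
    (F : EuclideanSpace ℝ (Fin d) → EuclideanSpace ℝ (Fin d)) :
    EuclideanSpace ℝ (Fin d) → EuclideanSpace ℝ (Fin d) :=
  fun z => z + lam • F z

/-- The residual tower `(1 + λ F_m) ∘ ⋯ ∘ (1 + λ F_1)` built from the blocks
`F 1, …, F m`. -/
noncomputable def resTower {d : ℕ} (lam : ℝ)
    (F : ℕ → EuclideanSpace ℝ (Fin d) → EuclideanSpace ℝ (Fin d)) :
    ℕ → EuclideanSpace ℝ (Fin d) → EuclideanSpace ℝ (Fin d)
  | 0 => id
  | m + 1 => resBlock lam (F (m + 1)) ∘ resTower lam F m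

section Taylor

variable {E G : Type*} [NormedAddCommGroup E] [NormedSpace ℝ E]
  [NormedAddCommGroup G] [NormedSpace ℝ G]

theorem ContDiffAt.isBigO_sub_sub_fderiv {f : E → G} {z₀ : E} (hf : ContDiffAt ℝ 2 f z₀) :
    (fun z => f z - f z₀ - fderiv ℝ f z₀ (z - z₀)) =O[𝓝 z₀] fun z => ‖z - z₀‖ ^ 2 := by
  obtain ⟨C, hC₀, hC⟩ :=
    ((hf.fderiv_right (m := 1) le_rfl).differentiableAt one_ne_zero).isBigO_sub.exists_nonneg
  have hdiff : ∀ᶠ z in 𝓝 z₀, DifferentiableAt ℝ f z :=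
    (hf.eventually (by simp)).mono fun z hz => hz.differentiableAt (by norm_num)
  obtain ⟨δ, hδ, hball⟩ := Metric.eventually_nhds_iff_ball.1 (hC.bound.and hdiff)
  refine .of_bound C ?_
  filter_upwards [Metric.ball_mem_nhds z₀ hδ] with z hz
  have hsub : Metric.closedBall z₀ ‖z - z₀‖ ⊆ Metric.ball z₀ δ :=
    Metric.closedBall_subset_ball (by rwa [← dist_eq_norm])
  calc ‖f z - f z₀ - fderiv ℝ f z₀ (z - z₀)‖ ≤ C * ‖z - z₀‖ * ‖z - z₀‖ :=
        (convex_closedBall z₀ _).norm_image_sub_le_of_norm_fderiv_le'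
          (fun w hw => (hball w (hsub hw)).2)
          (fun w hw => (hball w (hsub hw)).1.trans <| by
            gcongr
            exact mem_closedBall_iff_norm.1 hw)
          (Metric.mem_closedBall_self (norm_nonneg _)) (mem_closedBall_iff_norm.2 le_rfl)
    _ = C * ‖‖z - z₀‖ ^ 2‖ := by rw [norm_pow, norm_norm]; ring

theorem ContDiffAt.isBigO_comp_sub_linearization {f : E → G} {z₀ v : E} {γ : ℝ → E}
    (hf : ContDiffAt ℝ 2 f z₀) (hγ : (fun t => γ t - (z₀ + t • v)) =O[𝓝 0] fun t => t ^ 2) :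
    (fun t => f (γ t) - (f z₀ + t • fderiv ℝ f z₀ v)) =O[𝓝 0] fun t => t ^ 2 := by
  have hγ₁ : (fun t => γ t - z₀) =O[𝓝 0] fun t => t := by
    have hsq : (fun t : ℝ => t ^ 2) =O[𝓝 0] fun t => t := by
      simpa using (isLittleO_pow_pow (𝕜 := ℝ) one_lt_two).isBigO
    have hlin : (fun t : ℝ => t • v) =O[𝓝 0] fun t => t :=
      isBigO_of_le' (c := ‖v‖) _ fun t => by rw [norm_smul, mul_comm]
    exact ((hγ.trans hsq).add hlin).congr_left fun t => by abel
  have hγlim : Filter.Tendsto γ (𝓝 0) (𝓝 z₀) :=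
    tendsto_sub_nhds_zero_iff.1 (hγ₁.trans_tendsto Filter.tendsto_id)
  have hrem : (fun t => f (γ t) - f z₀ - fderiv ℝ f z₀ (γ t - z₀)) =O[𝓝 0] fun t => t ^ 2 :=
    (hf.isBigO_sub_sub_fderiv.comp_tendsto hγlim).trans (hγ₁.norm_left.pow 2)
  have hlin : (fun t => fderiv ℝ f z₀ (γ t - (z₀ + t • v))) =O[𝓝 0] fun t => t ^ 2 :=
    ((fderiv ℝ f z₀).isBigO_comp _ _).trans hγ
  refine (hrem.add hlin).congr_left fun t => ?_
  rw [show γ t - (z₀ + t • v) = (γ t - z₀) - t • v by abel,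
    map_sub (fderiv ℝ f z₀) (γ t - z₀), map_smul]
  abel

end Taylor

theorem sum_filter_lt_Icc_succ {M : Type*} [AddCommMonoid M] (m : ℕ) (g : ℕ → ℕ → M) :
    ∑ p ∈ (Icc 1 (m + 1) ×ˢ Icc 1 (m + 1)).filter (fun p => p.1 < p.2), g p.1 p.2 =
      ∑ p ∈ (Icc 1 m ×ˢ Icc 1 m).filter (fun p => p.1 < p.2), g p.1 p.2 +
        ∑ i ∈ Icc 1 m, g i (m + 1) := by
  simp only [sum_filter, sum_product]
  rw [sum_Icc_succ_top (by omega)]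
  simp only [sum_Icc_succ_top (show 1 ≤ m + 1 by omega)]
  have hlt : ∀ i ∈ Icc 1 m, i < m + 1 := fun i hi => Nat.lt_succ_of_le (mem_Icc.1 hi).2
  rw [sum_add_distrib, sum_ite_of_true hlt, sum_ite_of_false fun j hj => (hlt j hj).not_gt,
    if_neg (lt_irrefl _), sum_const_zero, add_zero, add_zero]

theorem resTower_sub_expansion_isBigO {d n : ℕ}
    (F : ℕ → EuclideanSpace ℝ (Fin d) → EuclideanSpace ℝ (Fin d))
    (z₀ : EuclideanSpace ℝ (Fin d)) (hF : ∀ i ∈ Icc 1 n, ContDiffAt ℝ 2 (F i) z₀) :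
    (fun t : ℝ => resTower t F n z₀ -
        (z₀ + t • ∑ i ∈ Icc 1 n, F i z₀
          + t ^ 2 • ∑ p ∈ (Icc 1 n ×ˢ Icc 1 n).filter (fun p => p.1 < p.2),
              fderiv ℝ (F p.2) z₀ (F p.1 z₀)))
      =O[𝓝 0] fun t => t ^ 3 := by
  induction n with
  | zero => simpa [resTower] using isBigO_zero _ _
  | succ m ih =>
    set A := ∑ i ∈ Icc 1 m, F i z₀
    set B := ∑ p ∈ (Icc 1 m ×ˢ Icc 1 m).filter (fun p => p.1 < p.2),
      fderiv ℝ (F p.2) z₀ (F p.1 z₀)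
    have ihm := ih fun i hi => hF i (Icc_subset_Icc_right m.le_succ hi)
    have hγ : (fun t : ℝ => resTower t F m z₀ - (z₀ + t • A)) =O[𝓝 0] fun t => t ^ 2 := by
      have hB : (fun t : ℝ => t ^ 2 • B) =O[𝓝 0] fun t => t ^ 2 :=
        isBigO_of_le' (c := ‖B‖) _ fun t => by rw [norm_smul, mul_comm]
      exact ((ihm.trans (isLittleO_pow_pow (by norm_num)).isBigO).add hB).congr_left
        fun t => by abel
    have hquad := (hF (m + 1) (right_mem_Icc.2 (by omega))).isBigO_comp_sub_linearization hγ
    have hlast : (fun t : ℝ => t • (F (m + 1) (resTower t F m z₀) -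
        (F (m + 1) z₀ + t • fderiv ℝ (F (m + 1)) z₀ A))) =O[𝓝 0] fun t => t ^ 3 :=
      ((isBigO_refl (fun t : ℝ => t) _).smul hquad).congr_right fun t => by ring
    refine (ihm.add hlast).congr_left fun t => ?_
    rw [sum_Icc_succ_top (by omega),
      sum_filter_lt_Icc_succ m fun i j => fderiv ℝ (F j) z₀ (F i z₀), ← map_sum]
    change _ = resTower t F m z₀ + t • F (m + 1) (resTower t F m z₀) - _
    simp only [smul_add, smul_sub, smul_smul, ← pow_two]
    abel

/-- **Residual network expansion.** For an encoder `E`, `C³` residual branches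
`F_1, …, F_n` and an affine decoder `D(z) = W z + b`, the network
`f_λ(x) = D(R_λ(E(x)))` satisfies, at every input `x`,
`f_λ(x) = D(E(x)) + λ ∑ᵢ W(Fᵢ(E(x))) + λ² ∑_{i<j} W((D F_j)(E(x))(Fᵢ(E(x)))) + O(λ³)`
as `λ → 0`. -/
theorem residual_network_expansion (p d q n : ℕ)
    (E : EuclideanSpace ℝ (Fin p) → EuclideanSpace ℝ (Fin d))
    (F : ℕ → EuclideanSpace ℝ (Fin d) → EuclideanSpace ℝ (Fin d))
    (hF : ∀ i ∈ Finset.Icc 1 n, ContDiff ℝ 3 (F i))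
    (W : EuclideanSpace ℝ (Fin d) →L[ℝ] EuclideanSpace ℝ (Fin q))
    (b : EuclideanSpace ℝ (Fin q))
    (x : EuclideanSpace ℝ (Fin p)) :
    (fun lam : ℝ =>
        (W (resTower lam F n (E x)) + b) -
          ((W (E x) + b)
             + lam • ∑ i ∈ Finset.Icc 1 n, W (F i (E x))
             + lam ^ 2 •
               ∑ p ∈ (Finset.Icc 1 n ×ˢ Finset.Icc 1 n).filter (fun p => p.1 < p.2),
                 W (fderiv ℝ (F p.2) (E x) (F p.1 (E x)))))
      =O[𝓝 0] (fun lam : ℝ => lam ^ 3) := by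
  have htower := resTower_sub_expansion_isBigO F (E x)
    fun i hi => (hF i hi).contDiffAt.of_le (by norm_num)
  refine ((W.isBigO_comp _ _).trans htower).congr_left fun t => ?_
  simp only [map_sub, map_add, map_smul, map_sum]
  abel
end

section
/- Let d, n ∈ ℕ and let F_1, …, F_n : ℝ^d → ℝ^d each be twice continuously differentiable (ContDiff ℝ 2). For λ ∈ ℝ let R_λ = (id + λF_n) ∘ ⋯ ∘ (id + λF_1). Then for every z ∈ ℝ^d, the second iterated derivative of the map λ ↦ R_λ(z) at λ = 0 equals 2 · Σ_{1 ≤ i < j ≤ n} (D F_j)(z)(F_i(z)), where (D F_j)(z) is the Fréchet derivative of F_j at z. -/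
/-!
Write the tower of height `m + 1` at `z` as `g λ + λ • F (m + 1) (g λ)`, where `g` is the tower of
height `m`. The Leibniz rule gives second derivative `g''(0) + 2 DF_{m+1}(g 0)(g'(0))` at `λ = 0`,
and `g 0 = z`, `g'(0) = ∑_{i ≤ m} F_i z`; so each new block contributes exactly the pairs
`(i, m + 1)` with `i ≤ m`, and induction on the height finishes the proof.
-/

open Topology Asymptotics Finset

theorem Finset.sum_filter_lt_insert_product {α M : Type*} [LinearOrder α] [AddCommMonoid M]
    (f : α → α → M) {s : Finset α} {a : α} (ha : ∀ i ∈ s, i < a) :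
    ∑ p ∈ (insert a s ×ˢ insert a s).filter (fun p => p.1 < p.2), f p.1 p.2 =
      ∑ p ∈ (s ×ˢ s).filter (fun p => p.1 < p.2), f p.1 p.2 + ∑ i ∈ s, f i a := by
  have has : a ∉ s := fun h => lt_irrefl a (ha a h)
  have h₀ : (∑ j ∈ s, if a < j then f a j else 0) = 0 :=
    sum_eq_zero fun j hj => if_neg (ha j hj).le.not_gt
  simp only [sum_filter, sum_product, sum_insert has, lt_irrefl, if_false, h₀, zero_add]
  rw [add_comm _ (∑ i ∈ s, f i a), ← sum_add_distrib]
  exact sum_congr rfl fun i hi => by rw [if_pos (ha i hi)]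

section Curves

variable {E : Type*} [NormedAddCommGroup E] [NormedSpace ℝ E]

theorem hasDerivAt_smul_self_zero {u : ℝ → E} (hu : ContinuousAt u 0) :
    HasDerivAt (fun t : ℝ => t • u t) (u 0) 0 := by
  rw [hasDerivAt_iff_tendsto_slope_zero]
  refine hu.tendsto.mono_left nhdsWithin_le_nhds |>.congr' ?_
  filter_upwards [self_mem_nhdsWithin] with t (ht : t ≠ 0)
  simp [smul_smul, inv_mul_cancel₀ ht]

variable {g : ℝ → E} {G : E → E}

theorem HasDerivAt.add_smul_comp_zero {g' : E} (hg : HasDerivAt g g' 0)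
    (hG : ContinuousAt G (g 0)) :
    HasDerivAt (fun t => g t + t • G (g t)) (g' + G (g 0)) 0 :=
  hg.add <| hasDerivAt_smul_self_zero <| hG.comp hg.continuousAt

theorem iteratedDeriv_two_add_smul_comp_zero (hg : ContDiff ℝ 2 g) (hG : ContDiff ℝ 1 G) :
    iteratedDeriv 2 (fun t => g t + t • G (g t)) 0 =
      iteratedDeriv 2 g 0 + (2 : ℝ) • fderiv ℝ G (g 0) (deriv g 0) := by
  have hg₁ : Differentiable ℝ g := hg.differentiable two_ne_zero
  have hG₁ : Differentiable ℝ G := hG.differentiable one_ne_zero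
  set u : ℝ → E := fun t => fderiv ℝ G (g t) (deriv g t)
  have hderiv :
      deriv (fun t => g t + t • G (g t)) = fun t => deriv g t + (t • u t + G (g t)) := by
    funext t
    have hGg : HasDerivAt (fun t => G (g t)) (u t) t :=
      (hG₁ (g t)).hasFDerivAt.comp_hasDerivAt t (hg₁ t).hasDerivAt
    have h : HasDerivAt (fun t => g t + t • G (g t))
        (deriv g t + (t • u t + (1 : ℝ) • G (g t))) t :=
      (hg₁ t).hasDerivAt.add ((hasDerivAt_id' t).smul hGg)
    rw [h.deriv, one_smul]
  have hu : Continuous u :=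
    ((hG.continuous_fderiv one_ne_zero).comp hg.continuous).clm_apply
      (hg.continuous_deriv one_le_two)
  have hg₂ : DifferentiableAt ℝ (deriv g) 0 := hg.differentiable_deriv_two 0
  have hGg₀ : HasDerivAt (fun t => G (g t)) (u 0) 0 :=
    (hG₁ (g 0)).hasFDerivAt.comp_hasDerivAt 0 (hg₁ 0).hasDerivAt
  have H : HasDerivAt (fun t => deriv g t + (t • u t + G (g t)))
      (deriv (deriv g) 0 + (u 0 + u 0)) 0 :=
    hg₂.hasDerivAt.add ((hasDerivAt_smul_self_zero hu.continuousAt).add hGg₀)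
  rw [iteratedDeriv_succ, iteratedDeriv_one, iteratedDeriv_succ, iteratedDeriv_one, hderiv,
    H.deriv, two_smul]

end Curves

section ResTower

variable {d : ℕ} (F : ℕ → EuclideanSpace ℝ (Fin d) → EuclideanSpace ℝ (Fin d))
  (z : EuclideanSpace ℝ (Fin d))

theorem resTower_succ_apply (lam : ℝ) (m : ℕ) :
    resTower lam F (m + 1) z = resTower lam F m z + lam • F (m + 1) (resTower lam F m z) :=
  rfl

theorem resTower_zero_apply (m : ℕ) : resTower 0 F m z = z := by
  induction m with
  | zero => rfl
  | succ m ih => simp [resTower_succ_apply, ih]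

theorem contDiff_resTower {k : WithTop ℕ∞} {m : ℕ} (hF : ∀ i ∈ Icc 1 m, ContDiff ℝ k (F i)) :
    ContDiff ℝ k (fun lam : ℝ => resTower lam F m z) := by
  induction m with
  | zero => exact contDiff_const
  | succ m ih =>
    have hg := ih fun i hi => hF i (Icc_subset_Icc_right m.le_succ hi)
    simp only [resTower_succ_apply]
    exact hg.add (contDiff_id.smul ((hF (m + 1) (by simp)).comp hg))

theorem hasDerivAt_resTower_zero {m : ℕ} (hF : ∀ i ∈ Icc 1 m, ContinuousAt (F i) z) :
    HasDerivAt (fun lam : ℝ => resTower lam F m z) (∑ i ∈ Icc 1 m, F i z) 0 := by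
  induction m with
  | zero =>
    rw [Icc_eq_empty (by omega), sum_empty]
    exact hasDerivAt_const _ _
  | succ m ih =>
    have hg := ih fun i hi => hF i (Icc_subset_Icc_right m.le_succ hi)
    simp only [resTower_succ_apply]
    rw [sum_Icc_succ_top (by omega)]
    have hFm : ContinuousAt (F (m + 1)) (resTower 0 F m z) := by
      rw [resTower_zero_apply]
      exact hF (m + 1) (by simp)
    simpa only [resTower_zero_apply] using hg.add_smul_comp_zero hFm

end ResTower

/-- **Order-2 ensemble term as the second λ-derivative.** For `C²` residual branches
`F_1, …, F_n`, at every point `z` the second iterated derivative of `λ ↦ R_λ(z)`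
at `λ = 0` equals `2 ∑_{i<j} (D F_j)(z)(Fᵢ(z))`. -/
theorem residual_tower_second_deriv_at_zero (d n : ℕ)
    (F : ℕ → EuclideanSpace ℝ (Fin d) → EuclideanSpace ℝ (Fin d))
    (hF : ∀ i ∈ Finset.Icc 1 n, ContDiff ℝ 2 (F i))
    (z : EuclideanSpace ℝ (Fin d)) :
    iteratedDeriv 2 (fun lam : ℝ => resTower lam F n z) 0 =
      (2 : ℝ) •
        ∑ p ∈ (Finset.Icc 1 n ×ˢ Finset.Icc 1 n).filter (fun p => p.1 < p.2),
          fderiv ℝ (F p.2) z (F p.1 z) := by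
  induction n with
  | zero => simp [resTower, iteratedDeriv_const]
  | succ m ih =>
    have hF' : ∀ i ∈ Icc 1 m, ContDiff ℝ 2 (F i) :=
      fun i hi => hF i (Icc_subset_Icc_right m.le_succ hi)
    have hFm : ContDiff ℝ 2 (F (m + 1)) := hF (m + 1) (by simp)
    have hderiv := hasDerivAt_resTower_zero F z fun i hi => (hF' i hi).continuous.continuousAt
    simp only [resTower_succ_apply]
    rw [iteratedDeriv_two_add_smul_comp_zero (contDiff_resTower F z hF') (hFm.of_le one_le_two),
      ih hF', resTower_zero_apply, hderiv.deriv, map_sum,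
      ← insert_Icc_right_eq_Icc_add_one (by omega : 1 ≤ m + 1),
      sum_filter_lt_insert_product (fun i j => fderiv ℝ (F j) z (F i z))
        fun i hi => Nat.lt_add_one_of_le (mem_Icc.1 hi).2, smul_add]
end
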